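/- Let k ≥ 3 be an integer, let T be a simple tree with at least two vertices, and let S ⊆ V(T) be a set of vertices containing every vertex of T of valence at most k − 1. Construct a graph 𝒯(T) as follows: take k disjoint copies of T, and for each vertex v ∈ S, connect its k copies pairwise with C(k,2) edges (so the copies of v form a complete graph K_k). Then gon(𝒯(T)) = k. -/

import Mathlib

/-- A finite loopless multigraph: a finite vertex type, a finite edge type,
and an assignment of an unordered pair of distinct endpoints to each edge. -/
structure Multigraph where
  V : Type
  E : Type
  [fintypeV : Fintype V]
  [fintypeE : Fintype E]
  [decEqV : DecidableEq V]
  ends : E → Sym2 V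
  loopless : ∀ e, ¬ (ends e).IsDiag

attribute [instance] Multigraph.fintypeV Multigraph.fintypeE Multigraph.decEqV

namespace Multigraph

/-- The graph obtained by deleting the edges in `W` is connected (finite graphs are
connected iff the vertex set is nonempty and every nonempty proper vertex subset
has an edge leaving it). -/
def ConnectedWithout (G : Multigraph) (W : Set G.E) : Prop :=
  Nonempty G.V ∧
    ∀ A : Finset G.V, A.Nonempty → A ≠ Finset.univ →
      ∃ e, e ∉ W ∧ ∃ u v, G.ends e = s(u, v) ∧ u ∈ A ∧ v ∉ A

/-- `G` is connected. -/
def Connected (G : Multigraph) : Prop := G.ConnectedWithout ∅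

/-- `G` is `k`-edge-connected: deleting any set of at most `k - 1` edges
leaves a connected graph. -/
def EdgeConnected (G : Multigraph) (k : ℕ) : Prop :=
  ∀ W : Finset G.E, W.card < k → G.ConnectedWithout ↑W

/-- An edge is a bridge if deleting it disconnects the graph. -/
def IsBridge (G : Multigraph) (e : G.E) : Prop := ¬ G.ConnectedWithout {e}

/-- The graph obtained by deleting the vertices in `U` (and all incident edges)
is connected. -/
def ConnectedAvoiding (G : Multigraph) (U : Set G.V) : Prop :=
  (∃ v, v ∉ U) ∧
    ∀ A : Finset G.V, A.Nonempty → (∀ a ∈ A, a ∉ U) → (∃ w, w ∉ U ∧ w ∉ A) →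
      ∃ e u v, G.ends e = s(u, v) ∧ u ∈ A ∧ v ∉ A ∧ v ∉ U

/-- `G` is `k`-vertex-connected: deleting any set of at most `k - 1` vertices
leaves a connected graph. -/
def VertexConnected (G : Multigraph) (k : ℕ) : Prop :=
  ∀ U : Finset G.V, U.card < k → G.ConnectedAvoiding ↑U

/-- `G` is simple: no two distinct edges have the same pair of endpoints. -/
def Simple (G : Multigraph) : Prop :=
  ∀ e e' : G.E, G.ends e = G.ends e' → e = e'

/-- The genus `g(G) = |E| - |V| + 1`. -/
def genus (G : Multigraph) : ℤ :=
  (Fintype.card G.E : ℤ) - (Fintype.card G.V : ℤ) + 1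

/-- A tree is a connected graph of genus 0. -/
def IsTree (G : Multigraph) : Prop := G.Connected ∧ G.genus = 0

/-- The number of edges joining `u` and `v`. -/
noncomputable def numEdges (G : Multigraph) (u v : G.V) : ℕ :=
  Set.ncard {e : G.E | G.ends e = s(u, v)}

/-- The valence of a vertex: the number of incident edges. -/
noncomputable def valence (G : Multigraph) (v : G.V) : ℕ :=
  Set.ncard {e : G.E | v ∈ G.ends e}

/-- A divisor on `G`: an element of the free abelian group on `V(G)`. -/
abbrev Divisor (G : Multigraph) : Type := G.V → ℤ

/-- The degree of a divisor: the sum of its coefficients. -/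
def degree (G : Multigraph) (D : G.Divisor) : ℤ := ∑ v, D v

/-- A divisor is effective if all its coefficients are nonnegative. -/
def Effective (G : Multigraph) (D : G.Divisor) : Prop := ∀ v, 0 ≤ D v

/-- The Laplacian of `G` applied to an integer vector `f`. -/
noncomputable def laplacian (G : Multigraph) (f : G.V → ℤ) : G.Divisor :=
  fun v => ∑ w, (G.numEdges v w : ℤ) * (f v - f w)

/-- Linear equivalence of divisors: the difference is in the image of the Laplacian. -/
def LinEquiv (G : Multigraph) (D D' : G.Divisor) : Prop :=
  ∃ f : G.V → ℤ, D - D' = G.laplacian f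

/-- `D - F` is equivalent to an effective divisor for every effective `F` of degree `k`. -/
def RankGe (G : Multigraph) (D : G.Divisor) (k : ℤ) : Prop :=
  ∀ F : G.Divisor, G.Effective F → G.degree F = k →
    ∃ E' : G.Divisor, G.Effective E' ∧ G.LinEquiv (D - F) E'

/-- The Baker–Norine rank of a divisor. -/
noncomputable def rank (G : Multigraph) (D : G.Divisor) : ℤ :=
  sSup {r : ℤ | r = -1 ∨ (0 ≤ r ∧ G.RankGe D r)}

/-- The (divisorial) gonality of `G`: the minimum degree of an effective divisor
of rank at least 1. -/
noncomputable def gonality (G : Multigraph) : ℕ :=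
  sInf {n : ℕ | ∃ D : G.Divisor, G.Effective D ∧ G.degree D = (n : ℤ) ∧ 1 ≤ G.rank D}

end Multigraph

/-- A morphism of multigraphs: vertices map to vertices, and each edge maps either
to an edge joining the images of its endpoints (if they are distinct) or to the
common image of its endpoints. -/
structure Morphism (G G' : Multigraph) where
  vertexMap : G.V → G'.V
  edgeMap : G.E → G'.E ⊕ G'.V
  map_edge_of_eq : ∀ e u v, G.ends e = s(u, v) → vertexMap u = vertexMap v →
    edgeMap e = Sum.inr (vertexMap u)
  map_edge_of_ne : ∀ e u v, G.ends e = s(u, v) → vertexMap u ≠ vertexMap v →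
    ∃ e', edgeMap e = Sum.inl e' ∧ G'.ends e' = s(vertexMap u, vertexMap v)

namespace Morphism

variable {G G' : Multigraph}

/-- The multiplicity `m_φ(v)` of `φ` at `v` with respect to an edge `e'` of `G'`. -/
noncomputable def mult (φ : Morphism G G') (v : G.V) (e' : G'.E) : ℕ :=
  Set.ncard {e : G.E | v ∈ G.ends e ∧ φ.edgeMap e = Sum.inl e'}

/-- `φ` is harmonic if `m_φ(v)` does not depend on the chosen edge `e'`
incident to `φ(v)`. -/
def Harmonic (φ : Morphism G G') : Prop :=
  ∀ (v : G.V) (e₁ e₂ : G'.E),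
    φ.vertexMap v ∈ G'.ends e₁ → φ.vertexMap v ∈ G'.ends e₂ →
      φ.mult v e₁ = φ.mult v e₂

/-- `φ` is non-degenerate if `m_φ(v) > 0` for every vertex `v`. -/
def Nondegenerate (φ : Morphism G G') : Prop :=
  ∀ (v : G.V) (e' : G'.E), φ.vertexMap v ∈ G'.ends e' → 0 < φ.mult v e'

/-- `φ` has degree `d`: every edge of `G'` has exactly `d` preimages. -/
def HasDegree (φ : Morphism G G') (d : ℕ) : Prop :=
  Nonempty G'.E ∧ ∀ e' : G'.E, Set.ncard {e : G.E | φ.edgeMap e = Sum.inl e'} = d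

end Morphism

/-- The graph `𝒯(T)` for general `k`: `k` disjoint copies of `T`, where for each
`v ∈ S` the `k` copies of `v` are joined pairwise by `k.choose 2` edges, forming
a complete graph `K_k`. -/
noncomputable def kCopies (k : ℕ) (T : Multigraph) (S : Finset T.V) : Multigraph where
  V := Fin k × T.V
  E := (Fin k × T.E) ⊕ ({v // v ∈ S} × {p : Fin k × Fin k // p.1 < p.2})
  ends := fun e =>
    match e with
    | Sum.inl (i, e) => Sym2.map (fun v => (i, v)) (T.ends e)
    | Sum.inr (v, p) => s((p.1.1, v.1), (p.1.2, v.1))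
  loopless := by
    rintro (⟨i, e⟩ | ⟨v, p⟩) h
    all_goals dsimp only at h
    · have hT := T.loopless e
      generalize hq : T.ends e = q at h hT
      induction q using Sym2.ind with
      | _ x y =>
        rw [Sym2.map_pair_eq, Sym2.mk_isDiag_iff] at h
        exact hT (Sym2.mk_isDiag_iff.mpr (congrArg Prod.snd h))
    · rw [Sym2.mk_isDiag_iff] at h
      exact absurd (congrArg Prod.fst h) (ne_of_lt p.2)


/-!
The upper bound comes from the divisor with one chip on each copy of a vertex `v`. In a tree
every edge is a bridge, and firing one side of a bridge moves a chip across it, so any two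
vertices of `T` are linearly equivalent; pulled back along the projection `𝒯(T) → T`, this
moves the `k` chips onto the `k` copies of any prescribed vertex.

For the lower bound, `𝒯(T)` is `k`-edge-connected. In a tree, a vertex set with fewer than `k`
boundary edges contains a vertex of valence `< k`, and such vertices lie in `S`; the complete
graph on the copies of a vertex of `S` having `c` of its `k` copies in a set `A` contributes
`c (k - c) ≥ k - 1` edges to the cut of `A`. Whether `A` cuts some copy of `T` or is a union of
whole copies, this gives at least `k` cut edges. On a `k`-edge-connected graph, a divisor `D` of
degree `< k` misses some vertex `q`; if `D - q ~ E ≥ 0` via the Laplacian of `f`, the set where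
`f` is maximal would lose at least `k` chips, more than `D` has.
-/

namespace Multigraph

open Finset

variable (G : Multigraph)

/-! ### Counting edges -/

lemma numEdges_eq_sum (u v : G.V) :
    G.numEdges u v = ∑ e, if G.ends e = s(u, v) then 1 else 0 := by
  rw [numEdges, Set.ncard_eq_toFinset_card', Set.toFinset_ofPred, card_filter]

lemma numEdges_comm (u v : G.V) : G.numEdges u v = G.numEdges v u := by
  rw [numEdges, numEdges, Sym2.eq_swap]

lemma numEdges_self (v : G.V) : G.numEdges v v = 0 := by
  rw [numEdges_eq_sum, sum_eq_zero]
  intro e _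
  rw [if_neg]
  exact fun h => G.loopless e (h ▸ Sym2.mk_isDiag_iff.mpr rfl)

lemma exists_ends_eq (e : G.E) : ∃ a b, G.ends e = s(a, b) ∧ a ≠ b := by
  induction h : G.ends e using Sym2.ind with
  | _ a b => exact ⟨a, b, rfl, fun hab => G.loopless e (h ▸ Sym2.mk_isDiag_iff.mpr hab)⟩

lemma valence_eq_sum_numEdges (v : G.V) : G.valence v = ∑ w, G.numEdges v w := by
  simp only [numEdges_eq_sum]
  rw [sum_comm, valence, Set.ncard_eq_toFinset_card', Set.toFinset_ofPred, card_filter]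
  refine sum_congr rfl fun e _ => ?_
  by_cases hv : v ∈ G.ends e
  · obtain ⟨w, hw⟩ := Sym2.mem_iff_exists.mp hv
    simp_rw [if_pos hv, hw, Sym2.congr_right, sum_ite_eq, if_pos (mem_univ w)]
  · rw [if_neg hv, sum_eq_zero]
    intro w _
    rw [if_neg]
    intro h
    exact hv (h ▸ Sym2.mem_mk_left v w)

def innerEdges (B : Finset G.V) : Finset G.E :=
  univ.filter fun e => ∀ x ∈ G.ends e, x ∈ B

noncomputable def cutSize (B : Finset G.V) : ℕ :=
  ∑ u ∈ B, ∑ w ∈ Bᶜ, G.numEdges u w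

lemma cutSize_eq_sum_ite (B : Finset G.V) :
    G.cutSize B = ∑ u, ∑ w, if u ∈ B ∧ w ∉ B then G.numEdges u w else 0 := by
  simp only [cutSize, ite_and, sum_ite_irrel, sum_const_zero, ← sum_filter, filter_mem_eq_inter,
    univ_inter, filter_notMem_eq_sdiff, compl_eq_univ_sdiff]

lemma sum_sum_numEdges_eq_two_mul (B : Finset G.V) :
    ∑ u ∈ B, ∑ w ∈ B, G.numEdges u w = 2 * #(G.innerEdges B) := by
  simp only [numEdges_eq_sum]
  rw [sum_congr rfl fun _ _ => sum_comm, sum_comm, innerEdges, card_filter, mul_sum]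
  refine sum_congr rfl fun e _ => ?_
  obtain ⟨a, b, he, hab⟩ := G.exists_ends_eq e
  have hsplit : ∀ u w, (if s(a, b) = s(u, w) then 1 else 0) =
      (if u = a ∧ w = b then 1 else 0) + (if u = b ∧ w = a then 1 else 0) := by
    intro u w
    simp only [Sym2.eq_iff]
    split_ifs <;> grind
  simp only [he, hsplit, sum_add_distrib, ite_and, Sym2.mem_iff, forall_eq_or_imp, forall_eq]
  by_cases ha : a ∈ B <;> by_cases hb : b ∈ B <;> simp [ha, hb]

lemma sum_valence_eq (B : Finset G.V) :
    ∑ u ∈ B, G.valence u = 2 * #(G.innerEdges B) + G.cutSize B := by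
  rw [← sum_sum_numEdges_eq_two_mul, cutSize, ← sum_add_distrib]
  exact sum_congr rfl fun u _ => by rw [valence_eq_sum_numEdges, sum_add_sum_compl]

lemma cutSize_compl (B : Finset G.V) : G.cutSize Bᶜ = G.cutSize B := by
  rw [cutSize, cutSize, compl_compl, sum_comm]
  exact sum_congr rfl fun u _ => sum_congr rfl fun w _ => G.numEdges_comm w u

lemma cutSize_singleton (v : G.V) : G.cutSize {v} = G.valence v := by
  rw [cutSize, sum_singleton, valence_eq_sum_numEdges, ← add_sum_erase _ _ (mem_univ v),
    numEdges_self, zero_add, compl_eq_univ_sdiff, sdiff_singleton_eq_erase]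

/-! ### Connectivity and trees -/

variable {G}

lemma Connected.cutSize_pos (hG : G.Connected) {B : Finset G.V} (hB : B.Nonempty)
    (hB' : B ≠ univ) : 0 < G.cutSize B := by
  obtain ⟨e, -, u, v, he, hu, hv⟩ := hG.2 B hB hB'
  have huv : 0 < G.numEdges u v := (Set.ncard_pos (Set.toFinite _)).mpr ⟨e, he⟩
  exact huv.trans_le <| (single_le_sum (fun _ _ => Nat.zero_le _) (mem_compl.mpr hv)).trans
    (single_le_sum (f := fun u => ∑ w ∈ Bᶜ, G.numEdges u w) (fun _ _ => Nat.zero_le _) hu)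

lemma Connected.forall_of_adj (hG : G.Connected) {p : G.V → Prop} {v : G.V} (hv : p v)
    (hadj : ∀ e a b, G.ends e = s(a, b) → p a → p b) (w : G.V) : p w := by
  classical
  by_contra hw
  obtain ⟨e, -, a, b, he, ha, hb⟩ :=
    hG.2 (univ.filter p) ⟨v, by simpa using hv⟩ fun h => hw ((filter_eq_self.mp h) w (mem_univ w))
  simp only [mem_filter, mem_univ, true_and] at ha hb
  exact hb (hadj e a b he ha)

lemma ConnectedWithout.card_compl_add_card_innerEdges_le [DecidableEq G.E] {W : Finset G.E}
    (hG : G.ConnectedWithout ↑W) {B : Finset G.V} (hB : B.Nonempty) :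
    #Bᶜ + #(G.innerEdges B \ W) ≤ #(univ \ W) := by
  by_cases hBu : B = univ
  · subst hBu
    simp [innerEdges]
  obtain ⟨e, heW, u, v, he, hu, hv⟩ := hG.2 B hB hBu
  have hgrow : #(G.innerEdges B \ W) + 1 ≤ #(G.innerEdges (insert v B) \ W) := by
    refine card_lt_card ⟨fun x hx => ?_, fun h => ?_⟩
    · simp only [innerEdges, mem_sdiff, mem_filter, mem_univ, true_and] at hx ⊢
      exact ⟨fun y hy => mem_insert_of_mem (hx.1 y hy), hx.2⟩
    · have : e ∈ G.innerEdges B \ W := h (by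
        simp only [innerEdges, mem_sdiff, mem_filter, mem_univ, true_and, he, Sym2.mem_iff]
        exact ⟨by rintro x (rfl | rfl) <;> simp [hu], heW⟩)
      simp only [innerEdges, mem_sdiff, mem_filter, mem_univ, true_and, he] at this
      exact hv (this.1 v (Sym2.mem_mk_right u v))
  have hcompl : #(insert v B)ᶜ + 1 = #Bᶜ := by
    rw [compl_insert, card_erase_add_one (mem_compl.mpr hv)]
  have := card_compl_add_card_innerEdges_le hG (insert_nonempty v B)
  omega
termination_by #Bᶜ
decreasing_by
  rw [compl_insert]
  exact card_erase_lt_of_mem (mem_compl.mpr hv)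

lemma IsTree.card_innerEdges_lt (hT : G.IsTree) {B : Finset G.V} (hB : B.Nonempty) :
    #(G.innerEdges B) < #B := by
  classical
  have h := (show G.ConnectedWithout ↑(∅ : Finset G.E) by rw [coe_empty]; exact hT.1)
    |>.card_compl_add_card_innerEdges_le hB
  have hgenus := hT.2
  rw [genus] at hgenus
  have := card_add_card_compl B
  simp only [sdiff_empty, card_univ] at h this
  omega

lemma IsTree.isBridge (hT : G.IsTree) (e : G.E) : G.IsBridge e := by
  classical
  intro h
  obtain ⟨v⟩ := h.1
  have h' := (show G.ConnectedWithout ↑({e} : Finset G.E) by rw [coe_singleton]; exact h)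
    |>.card_compl_add_card_innerEdges_le (singleton_nonempty v)
  have hgenus := hT.2
  rw [genus] at hgenus
  rw [card_compl, card_singleton, card_sdiff_of_subset (subset_univ _), card_singleton,
    card_univ] at h'
  have := Fintype.card_pos_iff.mpr ⟨e⟩
  omega

lemma IsTree.exists_valence_lt_of_cutSize_lt (hT : G.IsTree) {k : ℕ} (hk : 2 ≤ k)
    {B : Finset G.V} (hB : B.Nonempty) (hcut : G.cutSize B < k) :
    ∃ u ∈ B, G.valence u < k := by
  by_contra! hval
  have hsum : #B * k ≤ ∑ u ∈ B, G.valence u := card_nsmul_le_sum _ _ _ hval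
  have hinner := hT.card_innerEdges_lt hB
  rw [sum_valence_eq] at hsum
  have hB1 : 1 ≤ #B := card_pos.mpr hB
  nlinarith

lemma IsTree.exists_ne_valence_lt (hT : G.IsTree) {k : ℕ} (hk : 2 ≤ k)
    (hcard : 2 ≤ Fintype.card G.V) :
    ∃ u₁ u₂, u₁ ≠ u₂ ∧ G.valence u₁ < k ∧ G.valence u₂ < k := by
  have hne : (univ : Finset G.V).Nonempty := univ_nonempty_iff.mpr hT.1.1
  obtain ⟨u₁, -, hu₁⟩ := hT.exists_valence_lt_of_cutSize_lt hk hne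
    (by simp only [cutSize, compl_univ, sum_empty, sum_const_zero]; omega)
  have hne' : ({u₁}ᶜ : Finset G.V).Nonempty := by
    rw [← card_pos, card_compl, card_singleton]
    omega
  obtain ⟨u₂, hu₂, hu₂'⟩ := hT.exists_valence_lt_of_cutSize_lt hk hne'
    (by rwa [cutSize_compl, cutSize_singleton])
  exact ⟨u₁, u₂, fun h => by simp [h] at hu₂, hu₁, hu₂'⟩

/-! ### Divisors and linear equivalence -/

variable (G)

lemma laplacian_add (f g : G.V → ℤ) :
    G.laplacian (f + g) = G.laplacian f + G.laplacian g := by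
  funext x
  simp only [laplacian, Pi.add_apply, ← sum_add_distrib]
  exact sum_congr rfl fun _ _ => by ring

lemma laplacian_neg (f : G.V → ℤ) : G.laplacian (-f) = -G.laplacian f := by
  funext x
  simp only [laplacian, Pi.neg_apply, ← sum_neg_distrib]
  exact sum_congr rfl fun _ _ => by ring

lemma sum_sum_numEdges_mul_sub_eq_zero (B : Finset G.V) (f : G.V → ℤ) :
    ∑ v ∈ B, ∑ w ∈ B, (G.numEdges v w : ℤ) * (f v - f w) = 0 := by
  have hanti : ∑ v ∈ B, ∑ w ∈ B, (G.numEdges v w : ℤ) * (f v - f w) =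
      ∑ v ∈ B, ∑ w ∈ B, -((G.numEdges v w : ℤ) * (f v - f w)) := by
    rw [sum_comm]
    exact sum_congr rfl fun v _ => sum_congr rfl fun w _ => by rw [G.numEdges_comm]; ring
  simp only [sum_neg_distrib] at hanti
  linarith

lemma degree_laplacian (f : G.V → ℤ) : G.degree (G.laplacian f) = 0 :=
  G.sum_sum_numEdges_mul_sub_eq_zero univ f

lemma degree_sub (D D' : G.Divisor) : G.degree (D - D') = G.degree D - G.degree D' :=
  sum_sub_distrib _ _

lemma degree_single (v : G.V) (n : ℤ) : G.degree (Pi.single v n) = n := by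
  simp [degree]

lemma effective_single (v : G.V) {n : ℤ} (hn : 0 ≤ n) : G.Effective (Pi.single v n) := by
  intro w
  rw [Pi.single_apply]
  split_ifs <;> omega

variable {G}

lemma Effective.degree_nonneg {D : G.Divisor} (hD : G.Effective D) : 0 ≤ G.degree D :=
  sum_nonneg fun v _ => hD v

lemma LinEquiv.refl (D : G.Divisor) : G.LinEquiv D D :=
  ⟨0, by funext; simp [laplacian]⟩

lemma LinEquiv.symm {D D' : G.Divisor} (h : G.LinEquiv D D') : G.LinEquiv D' D := by
  obtain ⟨f, hf⟩ := h
  exact ⟨-f, by rw [laplacian_neg, ← hf, neg_sub]⟩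

lemma LinEquiv.trans {D D' D'' : G.Divisor} (h : G.LinEquiv D D') (h' : G.LinEquiv D' D'') :
    G.LinEquiv D D'' := by
  obtain ⟨f, hf⟩ := h
  obtain ⟨g, hg⟩ := h'
  exact ⟨f + g, by rw [laplacian_add, ← hf, ← hg, sub_add_sub_cancel]⟩

lemma LinEquiv.sub_right {D D' : G.Divisor} (h : G.LinEquiv D D') (F : G.Divisor) :
    G.LinEquiv (D - F) (D' - F) := by
  obtain ⟨f, hf⟩ := h
  exact ⟨f, by rw [← hf, sub_sub_sub_cancel_right]⟩

lemma LinEquiv.degree_eq {D D' : G.Divisor} (h : G.LinEquiv D D') :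
    G.degree D = G.degree D' := by
  obtain ⟨f, hf⟩ := h
  have := G.degree_laplacian f
  rw [← hf, degree_sub] at this
  omega

lemma numEdges_eq_one_of_simple (hs : G.Simple) {e : G.E} {u v : G.V}
    (he : G.ends e = s(u, v)) : G.numEdges u v = 1 := by
  rw [numEdges, Set.ncard_eq_one]
  exact ⟨e, Set.ext fun e' => ⟨fun h => hs e' e (h.trans he.symm), fun h => h ▸ he⟩⟩

lemma numEdges_eq_zero {u v : G.V} (h : ∀ e, G.ends e ≠ s(u, v)) : G.numEdges u v = 0 := by
  rw [numEdges, Set.ncard_eq_zero]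
  exact Set.eq_empty_of_forall_notMem h

lemma linEquiv_single_of_cut {A : Finset G.V} {u v : G.V} (hu : u ∈ A) (hv : v ∉ A)
    (hcut : ∀ x ∈ A, ∀ y ∉ A, G.numEdges x y = if x = u ∧ y = v then 1 else 0) :
    G.LinEquiv (Pi.single u 1) (Pi.single v 1) := by
  refine ⟨fun x => if x ∈ A then 1 else 0, funext fun x => ?_⟩
  have hterm : ∀ y, (G.numEdges x y : ℤ) * ((if x ∈ A then 1 else 0) - if y ∈ A then 1 else 0) =
      (if x = u ∧ y = v then 1 else 0) - if x = v ∧ y = u then 1 else 0 := by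
    intro y
    by_cases hx : x ∈ A <;> by_cases hy : y ∈ A
    · have h₁ : ¬ (x = u ∧ y = v) := fun h => hv (h.2 ▸ hy)
      have h₂ : ¬ (x = v ∧ y = u) := fun h => hv (h.1 ▸ hx)
      simp [hx, hy, h₁, h₂]
    · have h₂ : ¬ (x = v ∧ y = u) := fun h => hv (h.1 ▸ hx)
      simp [hx, hy, hcut x hx y hy, h₂]
    · have h₁ : ¬ (x = u ∧ y = v) := fun h => hx (h.1 ▸ hu)
      rw [numEdges_comm, hcut y hy x hx]
      simp [hx, hy, h₁, and_comm]
    · have h₁ : ¬ (x = u ∧ y = v) := fun h => hx (h.1 ▸ hu)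
      have h₂ : ¬ (x = v ∧ y = u) := fun h => hy (h.2 ▸ hu)
      simp [hx, hy, h₁, h₂]
  simp only [laplacian, hterm, sum_sub_distrib, ite_and, Pi.sub_apply, Pi.single_apply]
  split_ifs <;> simp

lemma linEquiv_single_of_isBridge (hG : G.Connected) (hs : G.Simple) {e : G.E}
    (he : G.IsBridge e) {a b : G.V} (hab : G.ends e = s(a, b)) :
    G.LinEquiv (Pi.single a 1) (Pi.single b 1) := by
  obtain ⟨A, hA, hA', hclosed⟩ : ∃ A : Finset G.V, A.Nonempty ∧ A ≠ univ ∧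
      ∀ e', e' ≠ e → ∀ u v, G.ends e' = s(u, v) → u ∈ A → v ∈ A := by
    simpa [IsBridge, ConnectedWithout, hG.1] using he
  obtain ⟨e', -, u, v, he', hu, hv⟩ := hG.2 A hA hA'
  have hcross : ∀ e'' x y, G.ends e'' = s(x, y) → x ∈ A → y ∉ A → e'' = e :=
    fun e'' x y h hx hy => by_contra fun hne => hy (hclosed e'' hne x y h hx)
  have he'e := hcross e' u v he' hu hv
  have huv : G.LinEquiv (Pi.single u 1) (Pi.single v 1) := by
    refine linEquiv_single_of_cut hu hv fun x hx y hy => ?_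
    split_ifs with h
    · obtain ⟨rfl, rfl⟩ := h
      exact numEdges_eq_one_of_simple hs he'
    · refine numEdges_eq_zero fun e'' he'' => ?_
      have := he''.symm.trans (hcross e'' x y he'' hx hy ▸ he'e ▸ he')
      rcases Sym2.eq_iff.mp this with h' | ⟨rfl, -⟩
      exacts [h h', hv hx]
  rw [he'e, hab] at he'
  rcases Sym2.eq_iff.mp he' with ⟨rfl, rfl⟩ | ⟨rfl, rfl⟩
  exacts [huv, huv.symm]

lemma IsTree.linEquiv_single (hT : G.IsTree) (hs : G.Simple) (v w : G.V) :
    G.LinEquiv (Pi.single v 1) (Pi.single w 1) :=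
  hT.1.forall_of_adj (p := fun w => G.LinEquiv (Pi.single v 1) (Pi.single w 1))
    (LinEquiv.refl _)
    (fun e _ _ he h => h.trans (linEquiv_single_of_isBridge hT.1 hs (hT.isBridge e) he)) w

/-! ### Rank and edge-connectivity -/

lemma RankGe.of_le [Nonempty G.V] {D : G.Divisor} {r s : ℤ} (h : G.RankGe D r) (hsr : s ≤ r) :
    G.RankGe D s := by
  intro F hF hdeg
  obtain ⟨v⟩ := ‹Nonempty G.V›
  obtain ⟨E', hE', hlin⟩ := h (F + Pi.single v (r - s))
    (fun w => add_nonneg (hF w) (G.effective_single v (by omega) w))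
    (by
      have := G.degree_single v (r - s)
      simp only [degree, Pi.add_apply, sum_add_distrib] at hdeg this ⊢
      rw [hdeg, this]
      ring)
  refine ⟨E' + Pi.single v (r - s),
    fun w => add_nonneg (hE' w) (G.effective_single v (by omega) w), ?_⟩
  obtain ⟨f, hf⟩ := hlin
  exact ⟨f, by rw [← hf]; abel⟩

lemma RankGe.le_degree [Nonempty G.V] {D : G.Divisor} {r : ℤ} (h : G.RankGe D r) (hr : 0 ≤ r) :
    r ≤ G.degree D := by
  obtain ⟨v⟩ := ‹Nonempty G.V›
  obtain ⟨E', hE', hlin⟩ := h (Pi.single v r) (G.effective_single v hr) (G.degree_single v r)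
  have := hlin.degree_eq
  rw [degree_sub, degree_single] at this
  linarith [hE'.degree_nonneg]

lemma one_le_rank_iff [Nonempty G.V] {D : G.Divisor} : 1 ≤ G.rank D ↔ G.RankGe D 1 := by
  have hbdd : BddAbove {r : ℤ | r = -1 ∨ (0 ≤ r ∧ G.RankGe D r)} :=
    ⟨max (G.degree D) (-1), fun r hr => by
      rcases hr with rfl | ⟨hr, h⟩
      exacts [le_max_right _ _, (h.le_degree hr).trans (le_max_left _ _)]⟩
  constructor
  · intro h
    rcases Int.csSup_mem ⟨-1, Or.inl rfl⟩ hbdd with h' | ⟨-, h'⟩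
    · rw [rank, h'] at h
      omega
    · exact h'.of_le h
  · exact fun h => le_csSup hbdd (Or.inr ⟨zero_le_one, h⟩)

lemma eq_single_of_degree_eq_one {F : G.Divisor} (hF : G.Effective F) (hdeg : G.degree F = 1) :
    ∃ q, F = Pi.single q 1 := by
  obtain ⟨q, hq⟩ : ∃ q, 0 < F q := by
    by_contra! h
    have : G.degree F ≤ 0 := sum_nonpos fun v _ => h v
    omega
  have hrest := add_sum_erase univ F (mem_univ q)
  have hrest_nonneg : 0 ≤ ∑ v ∈ univ.erase q, F v := sum_nonneg fun v _ => hF v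
  rw [← degree, hdeg] at hrest
  have hzero := (sum_eq_zero_iff_of_nonneg fun v _ => hF v).mp
    (by omega : ∑ v ∈ univ.erase q, F v = 0)
  refine ⟨q, funext fun p => ?_⟩
  rw [Pi.single_apply]
  split_ifs with hp
  · subst hp; omega
  · exact hzero p (mem_erase.mpr ⟨hp, mem_univ p⟩)

lemma cutSize_le_sum_laplacian {A : Finset G.V} {f : G.V → ℤ}
    (hf : ∀ x ∈ A, ∀ y ∉ A, f y < f x) : (G.cutSize A : ℤ) ≤ ∑ x ∈ A, G.laplacian f x := by
  simp only [laplacian, ← sum_add_sum_compl A, sum_add_distrib,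
    G.sum_sum_numEdges_mul_sub_eq_zero, zero_add, cutSize, Nat.cast_sum]
  refine sum_le_sum fun x hx => sum_le_sum fun y hy => ?_
  have := hf x hx y (mem_compl.mp hy)
  nlinarith [(G.numEdges x y).cast_nonneg (α := ℤ)]

lemma le_degree_of_rankGe_one {k : ℕ}
    (hcut : ∀ A : Finset G.V, A.Nonempty → A ≠ univ → k ≤ G.cutSize A)
    {D : G.Divisor} (hD : G.Effective D) (hr : G.RankGe D 1) {q : G.V} (hq : D q = 0) :
    k ≤ G.degree D := by
  obtain ⟨E', hE', f, hf⟩ := hr (Pi.single q 1) (G.effective_single q zero_le_one)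
    (G.degree_single q 1)
  have hlap : ∀ x, G.laplacian f x = D x - (Pi.single q 1 : G.Divisor) x - E' x := fun x => by
    rw [← hf]; rfl
  have : Nonempty G.V := ⟨q⟩
  obtain ⟨m, hm⟩ := Finite.exists_max f
  set A := univ.filter fun x => f x = f m
  by_cases hA : A = univ
  · have hconst : ∀ x, f x = f m := fun x => by
      have hx : x ∈ A := hA ▸ mem_univ x
      simpa [A] using hx
    have := hlap q
    simp [laplacian, hconst, hq] at this
    linarith [hE' q]
  calc (k : ℤ) ≤ G.cutSize A := by exact_mod_cast hcut A ⟨m, by simp [A]⟩ hA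
    _ ≤ ∑ x ∈ A, G.laplacian f x := cutSize_le_sum_laplacian fun x hx y hy => by
        simp only [A, mem_filter, mem_univ, true_and] at hx hy
        exact hx ▸ lt_of_le_of_ne (hm y) hy
    _ ≤ ∑ x ∈ A, D x := sum_le_sum fun x _ => by
        rw [hlap]
        linarith [hE' x, G.effective_single q zero_le_one x]
    _ ≤ G.degree D := sum_le_sum_of_subset_of_nonneg (subset_univ A) fun x _ _ => hD x

lemma exists_eq_zero_of_degree_lt {D : G.Divisor} (hD : G.Effective D)
    (h : G.degree D < Fintype.card G.V) : ∃ q, D q = 0 := by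
  by_contra! hne
  have := card_nsmul_le_sum univ D 1 fun q _ => (hD q).lt_of_ne' (hne q)
  rw [card_univ, nsmul_one] at this
  exact h.not_ge this

lemma le_degree_of_le_cutSize {k : ℕ}
    (hcut : ∀ A : Finset G.V, A.Nonempty → A ≠ univ → k ≤ G.cutSize A)
    (hk : k ≤ Fintype.card G.V) {D : G.Divisor} (hD : G.Effective D) (hr : 1 ≤ G.rank D) :
    k ≤ G.degree D := by
  by_contra! hlt
  have := hD.degree_nonneg
  have : Nonempty G.V := Fintype.card_pos_iff.mp (by omega)
  obtain ⟨q, hq⟩ := exists_eq_zero_of_degree_lt hD (by omega)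
  exact hlt.not_ge (le_degree_of_rankGe_one hcut hD (one_le_rank_iff.mp hr) hq)

end Multigraph

/-! ### The graph `𝒯(T)` -/

lemma Sym2.map_prodMk_eq_mk_iff {α β : Type*} (a a₁ a₂ : α) (z : Sym2 β) (b₁ b₂ : β) :
    Sym2.map (Prod.mk a) z = s((a₁, b₁), (a₂, b₂)) ↔ a = a₁ ∧ a = a₂ ∧ z = s(b₁, b₂) := by
  induction z using Sym2.ind with
  | _ x y =>
    simp only [Sym2.map_mk, Sym2.eq_iff, Prod.mk.injEq]
    grind

lemma Nat.sub_one_le_mul_sub {c k : ℕ} (h₀ : 0 < c) (h₁ : c < k) : k - 1 ≤ c * (k - c) := by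
  obtain ⟨d, rfl⟩ : ∃ d, k = c + 1 + d := ⟨k - c - 1, by omega⟩
  rw [show c + 1 + d - c = d + 1 by omega, show c + 1 + d - 1 = c + d by omega]
  nlinarith [Nat.mul_le_mul_right d h₀]

namespace kCopies

open Finset Multigraph

variable {k : ℕ} {T : Multigraph} {S : Finset T.V}

lemma sum_ite_orderedPair_eq (i j : Fin k) :
    (∑ p : {p : Fin k × Fin k // p.1 < p.2}, if p.1 = (i, j) ∨ p.1 = (j, i) then 1 else 0) =
      if i = j then 0 else 1 := by
  rcases lt_trichotomy i j with h | rfl | h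
  · rw [Fintype.sum_eq_single ⟨(i, j), h⟩, if_pos (Or.inl rfl), if_neg h.ne]
    rintro ⟨p, hp⟩ hne
    rw [if_neg]
    rintro (rfl | rfl)
    exacts [hne rfl, hp.not_gt h]
  · simp only [or_self, if_true]
    exact Fintype.sum_eq_zero _ fun ⟨p, hp⟩ =>
      if_neg fun h => hp.ne (by obtain rfl : p = (i, i) := h; rfl)
  · rw [Fintype.sum_eq_single ⟨(j, i), h⟩, if_pos (Or.inr rfl), if_neg h.ne']
    rintro ⟨p, hp⟩ hne
    rw [if_neg]
    rintro (rfl | rfl)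
    exacts [hp.not_gt h, hne rfl]

lemma numEdges_eq (i j : Fin k) (u w : T.V) :
    (kCopies k T S).numEdges (i, u) (j, w) =
      if i = j then T.numEdges u w else if u = w ∧ u ∈ S then 1 else 0 := by
  refine (numEdges_eq_sum (kCopies k T S) (i, u) (j, w)).trans ?_
  erw [Fintype.sum_sum_type]
  simp only [kCopies, Sym2.map_prodMk_eq_mk_iff, Fintype.sum_prod_type]
  have hinr : ∀ (v : T.V) (p : Fin k × Fin k), s((p.1, v), (p.2, v)) = s((i, u), (j, w)) ↔
      (v = u ∧ v = w) ∧ (p = (i, j) ∨ p = (j, i)) := by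
    intro v p
    simp only [Sym2.eq_iff, Prod.ext_iff]
    grind
  simp only [hinr, ite_and, sum_ite_irrel, sum_const_zero, sum_ite_eq', mem_univ, if_true,
    sum_ite_orderedPair_eq]
  by_cases hij : i = j
  · simp [hij, numEdges_eq_sum]
  · rw [sum_coe_sort S fun v => if v = u then if v = w then if i = j then 0 else 1 else 0 else 0]
    by_cases huw : u = w <;> simp [hij, huw]

/-! ### Cuts of `𝒯(T)` -/

def slice (A : Finset (Fin k × T.V)) (i : Fin k) : Finset T.V :=
  univ.filter fun v => (i, v) ∈ A

def copyCount (A : Finset (Fin k × T.V)) (v : T.V) : ℕ :=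
  #(univ.filter fun i => (i, v) ∈ A)

@[simp]
lemma mem_slice {A : Finset (Fin k × T.V)} {i : Fin k} {v : T.V} :
    v ∈ slice A i ↔ (i, v) ∈ A := by
  simp [slice]

lemma copyCount_add_card_filter_not (A : Finset (Fin k × T.V)) (v : T.V) :
    copyCount A v + #(univ.filter fun i => (i, v) ∉ A) = k := by
  rw [copyCount, card_filter_add_card_filter_not, card_univ, Fintype.card_fin]

lemma copyCount_pos_iff {A : Finset (Fin k × T.V)} {v : T.V} :
    0 < copyCount A v ↔ ∃ i, (i, v) ∈ A := by
  simp [copyCount, card_pos, filter_nonempty_iff]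

lemma copyCount_lt_iff {A : Finset (Fin k × T.V)} {v : T.V} :
    copyCount A v < k ↔ ∃ i, (i, v) ∉ A := by
  have hpos : 0 < #(univ.filter fun i => (i, v) ∉ A) ↔ ∃ i, (i, v) ∉ A := by
    simp [card_pos, filter_nonempty_iff]
  have := copyCount_add_card_filter_not A v
  rw [← hpos]
  omega

lemma cutSize_eq (A : Finset (Fin k × T.V)) :
    (kCopies k T S).cutSize A =
      ∑ i, T.cutSize (slice A i) + ∑ v ∈ S, copyCount A v * (k - copyCount A v) := by
  refine ((kCopies k T S).cutSize_eq_sum_ite A).trans ?_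
  show ∑ x : Fin k × T.V, ∑ y : Fin k × T.V,
    (if x ∈ A ∧ y ∉ A then (kCopies k T S).numEdges x y else 0) = _
  have hsplit : ∀ i u j w, (if (i, u) ∈ A ∧ (j, w) ∉ A then
      (if i = j then T.numEdges u w else if u = w ∧ u ∈ S then 1 else 0) else 0) =
      (if j = i then (if u ∈ slice A i ∧ w ∉ slice A i then T.numEdges u w else 0) else 0) +
        if w = u then (if u ∈ S then
          (if (i, u) ∈ A then 1 else 0) * (if (j, u) ∉ A then 1 else 0) else 0) else 0 := by
    intro i u j w
    simp only [slice, mem_filter, mem_univ, true_and]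
    by_cases hij : j = i <;> by_cases huw : w = u
    · subst hij huw; simp
    · subst hij; simp [huw]
    · subst huw
      simp only [hij, Ne.symm hij, if_false, if_true, ite_and]
      split_ifs <;> rfl
    · simp [hij, huw, Ne.symm hij, Ne.symm huw]
  have hcompl : ∀ v, k - copyCount A v = #(univ.filter fun i => (i, v) ∉ A) := fun v => by
    have := copyCount_add_card_filter_not A v
    omega
  simp only [Fintype.sum_prod_type, numEdges_eq, hsplit, sum_add_distrib, sum_ite_irrel,
    sum_const_zero, sum_ite_eq', mem_univ, if_true, cutSize_eq_sum_ite, hcompl]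
  simp only [copyCount, card_filter, sum_mul_sum]
  congr 1
  rw [sum_comm]
  simp only [sum_ite_irrel, sum_const_zero]
  rw [sum_ite_mem, univ_inter]

lemma le_cutSize_of_copyCount {A : Finset (Fin k × T.V)} {v : T.V} (hv : v ∈ S)
    (h₀ : 0 < copyCount A v) (h₁ : copyCount A v < k)
    (hslices : 0 < ∑ i, T.cutSize (slice A i)) : k ≤ (kCopies k T S).cutSize A := by
  have hv' := single_le_sum (f := fun v => copyCount A v * (k - copyCount A v))
    (fun _ _ => Nat.zero_le _) hv
  have := Nat.sub_one_le_mul_sub h₀ h₁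
  rw [cutSize_eq]
  omega

lemma le_cutSize_of_slice (hk : 3 ≤ k) (hT : T.IsTree)
    (hS : ∀ v : T.V, T.valence v ≤ k - 1 → v ∈ S) {A : Finset (Fin k × T.V)} {i : Fin k}
    (h₁ : (slice A i).Nonempty) (h₂ : slice A i ≠ univ) : k ≤ (kCopies k T S).cutSize A := by
  have hi : T.cutSize (slice A i) ≤ ∑ j, T.cutSize (slice A j) :=
    single_le_sum (f := fun j => T.cutSize (slice A j)) (fun _ _ => Nat.zero_le _) (mem_univ i)
  have hslices := (hT.1.cutSize_pos h₁ h₂).trans_le hi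
  by_cases hbig : k ≤ T.cutSize (slice A i)
  · rw [cutSize_eq]
    omega
  obtain ⟨u, hu, hu'⟩ := hT.exists_valence_lt_of_cutSize_lt (k := k) (by omega) h₁ (by omega)
  obtain ⟨w, hw, hw'⟩ := hT.exists_valence_lt_of_cutSize_lt (k := k) (by omega)
    (by rwa [nonempty_iff_ne_empty, ne_eq, compl_eq_empty_iff]) (by rw [cutSize_compl]; omega)
  rw [mem_slice] at hu
  rw [mem_compl, mem_slice] at hw
  by_cases hcu : copyCount A u < k
  · exact le_cutSize_of_copyCount (hS u (by omega)) (copyCount_pos_iff.mpr ⟨i, hu⟩) hcu hslices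
  by_cases hcw : 0 < copyCount A w
  · exact le_cutSize_of_copyCount (hS w (by omega)) hcw (copyCount_lt_iff.mpr ⟨i, hw⟩) hslices
  -- every copy of `T` now meets `A` in a nonempty proper subset
  simp only [copyCount_lt_iff, copyCount_pos_iff, not_exists, not_not] at hcu hcw
  have hall : k ≤ ∑ j, T.cutSize (slice A j) := by
    simpa using card_nsmul_le_sum univ (fun j => T.cutSize (slice A j)) 1 fun j _ =>
      hT.1.cutSize_pos ⟨u, mem_slice.mpr (hcu j)⟩ fun h => hcw j (mem_slice.mp (h ▸ mem_univ w))
  rw [cutSize_eq]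
  omega

lemma le_cutSize_of_forall_slice (hk : 3 ≤ k) (hT : T.IsTree) (hcard : 2 ≤ Fintype.card T.V)
    (hS : ∀ v : T.V, T.valence v ≤ k - 1 → v ∈ S) {A : Finset (Fin k × T.V)}
    (hA : A.Nonempty) (hA' : A ≠ univ) (hslice : ∀ i, slice A i = ∅ ∨ slice A i = univ) :
    k ≤ (kCopies k T S).cutSize A := by
  obtain ⟨⟨i, x⟩, hx⟩ := hA
  obtain ⟨⟨j, y⟩, hy⟩ : ∃ p, p ∉ A := by
    by_contra! h
    exact hA' (eq_univ_iff_forall.mpr h)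
  have hmixed : ∀ v, 0 < copyCount A v ∧ copyCount A v < k := fun v => by
    refine ⟨copyCount_pos_iff.mpr ⟨i, ?_⟩, copyCount_lt_iff.mpr ⟨j, ?_⟩⟩
    · rcases hslice i with h | h
      · simpa [h] using mem_slice.mpr hx
      · exact mem_slice.mp (h ▸ mem_univ v)
    · rcases hslice j with h | h
      · exact mem_slice.not.mp (h ▸ notMem_empty v)
      · simpa [h] using mem_slice.not.mpr hy
  obtain ⟨u₁, u₂, hne, hu₁, hu₂⟩ := hT.exists_ne_valence_lt (k := k) (by omega) hcard
  have hpair := sum_le_sum_of_subset (f := fun v => copyCount A v * (k - copyCount A v))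
    (insert_subset_iff.mpr ⟨hS u₁ (by omega), singleton_subset_iff.mpr (hS u₂ (by omega))⟩)
  rw [sum_pair hne] at hpair
  have h₁ := Nat.sub_one_le_mul_sub (hmixed u₁).1 (hmixed u₁).2
  have h₂ := Nat.sub_one_le_mul_sub (hmixed u₂).1 (hmixed u₂).2
  rw [cutSize_eq]
  omega

lemma le_cutSize (hk : 3 ≤ k) (hT : T.IsTree) (hcard : 2 ≤ Fintype.card T.V)
    (hS : ∀ v : T.V, T.valence v ≤ k - 1 → v ∈ S) (A : Finset (Fin k × T.V))
    (hA : A.Nonempty) (hA' : A ≠ univ) : k ≤ (kCopies k T S).cutSize A := by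
  by_cases h : ∃ i, (slice A i).Nonempty ∧ slice A i ≠ univ
  · obtain ⟨i, h₁, h₂⟩ := h
    exact le_cutSize_of_slice hk hT hS h₁ h₂
  · push Not at h
    exact le_cutSize_of_forall_slice hk hT hcard hS hA hA' fun i =>
      (eq_empty_or_nonempty _).imp_right (h i)

/-! ### Divisors pulled back from `T` -/

def lift (D : T.Divisor) : (kCopies k T S).Divisor := fun p : Fin k × T.V => D p.2

lemma laplacian_lift (h : T.V → ℤ) (i : Fin k) (x : T.V) :
    (kCopies k T S).laplacian (lift h) (i, x) = T.laplacian h x := by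
  show ∑ p : Fin k × T.V, ((kCopies k T S).numEdges (i, x) p : ℤ) * (h x - h p.2) = _
  have hterm : ∀ j w, ((kCopies k T S).numEdges (i, x) (j, w) : ℤ) * (h x - h w) =
      if i = j then (T.numEdges x w : ℤ) * (h x - h w) else 0 := by
    intro j w
    rw [numEdges_eq]
    split_ifs <;> simp_all
  simp only [Fintype.sum_prod_type, hterm, sum_ite_irrel, sum_const_zero, sum_ite_eq, mem_univ,
    if_true, laplacian]

lemma linEquiv_lift {D D' : T.Divisor} (h : T.LinEquiv D D') :
    (kCopies k T S).LinEquiv (lift D) (lift D') := by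
  obtain ⟨f, hf⟩ := h
  exact ⟨lift f, funext fun p => (congrFun hf p.2).trans (laplacian_lift f p.1 p.2).symm⟩

lemma degree_lift_single (v : T.V) :
    (kCopies k T S).degree (lift (Pi.single v 1)) = k := by
  show ∑ p : Fin k × T.V, (Pi.single v 1 : T.Divisor) p.2 = k
  simp [Fintype.sum_prod_type]

lemma rankGe_one_lift_single (hT : T.IsTree) (hs : T.Simple) (v : T.V) :
    (kCopies k T S).RankGe (lift (Pi.single v 1)) 1 := by
  intro F hF hdeg
  obtain ⟨q, rfl⟩ := eq_single_of_degree_eq_one hF hdeg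
  refine ⟨lift (Pi.single q.2 1) - Pi.single q 1, fun p => ?_,
    (linEquiv_lift (hT.linEquiv_single hs v q.2)).sub_right _⟩
  by_cases hp : p = q
  · subst hp; simp [lift]
  · simp only [lift, Pi.sub_apply, Pi.single_apply, hp, if_false, sub_zero]
    split_ifs <;> omega

end kCopies

/-- Let `k ≥ 3`, let `T` be a simple tree with at least two
vertices, and let `S ⊆ V(T)` contain every vertex of valence at most `k - 1`.
Then `gon(𝒯(T)) = k`. -/
theorem stmt_17 (k : ℕ) (hk : 3 ≤ k) (T : Multigraph) (hsimple : T.Simple)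
    (hT : T.IsTree) (hcard : 2 ≤ Fintype.card T.V)
    (S : Finset T.V) (hS : ∀ v : T.V, T.valence v ≤ k - 1 → v ∈ S) :
    (kCopies k T S).gonality = k := by
  obtain ⟨v⟩ : Nonempty T.V := Fintype.card_pos_iff.mp (by omega)
  have : Nonempty (kCopies k T S).V := ⟨((⟨0, by omega⟩ : Fin k), v)⟩
  set D : (kCopies k T S).Divisor := kCopies.lift (Pi.single v 1)
  have hD : (kCopies k T S).Effective D := fun p => T.effective_single v zero_le_one p.2
  have hr : 1 ≤ (kCopies k T S).rank D :=
    Multigraph.one_le_rank_iff.mpr (kCopies.rankGe_one_lift_single hT hsimple v)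
  have hdeg : (kCopies k T S).degree D = k := kCopies.degree_lift_single v
  refine le_antisymm (Nat.sInf_le ⟨D, hD, hdeg, hr⟩) (le_csInf ⟨k, D, hD, hdeg, hr⟩ ?_)
  rintro n ⟨D', hD', hdeg', hr'⟩
  have hcardV : k ≤ Fintype.card (kCopies k T S).V :=
    (Fintype.card_prod (Fin k) T.V).symm ▸ (Fintype.card_fin k).symm ▸
      Nat.le_mul_of_pos_right k (by omega)
  have := Multigraph.le_degree_of_le_cutSize (kCopies.le_cutSize hk hT hcard hS) hcardV hD' hr'
  omega
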